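/- For every a > 0 and every ξ > 0, the improper integral ∫_0^∞ S_a(x)·sin(ξ·x) dx converges (as the limit of ∫_0^R as R → ∞) and equals −π/(2(ξ + a)). Consequently, the Fourier transform of the odd function S_a, understood in the improper sense lim_{R→∞} ∫_{−R}^{R} S_a(x)·e^{iξx} dx, equals −iπ·sign(ξ)/(|ξ| + a) for ξ ≠ 0. -/

import Mathlib

/-!
For `y > 0` put `f(y) = ∫₀^∞ e^{-yu} / (1 + u²) du`. Writing `1/(s + y) = ∫₀^∞ e^{-(s+y)u} du`
and exchanging the integrals gives `∫₀^∞ sin s / (s + y) ds = f(y)`; as this integral is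
`∫_y^∞ sin (t - y) / t dt = -(si y cos y - ci y sin y)`, we get `S_a(x) = -sign(x) f(a|x|)`.
Exchanging the integrals once more,
`∫₀^∞ f(ax) sin(ξx) dx = ∫₀^∞ ξ / ((au)² + ξ²) · du / (1 + u²) = π / (2(ξ + a))`,
where dominated convergence is justified by `|∫₀^R e^{-bx} sin(ξx) dx| ≤ 3/ξ` for `b ≥ 0`.
Since `S_a` is odd, only the sine part of its Fourier integral survives.
-/

open Filter MeasureTheory Topology

/-- The sine integral `si(x) = -∫_x^∞ sin t / t dt`, defined via the improper
(limit of interval integrals) form. -/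
noncomputable def si (x : ℝ) : ℝ :=
  - limUnder Filter.atTop (fun R : ℝ => ∫ t in x..R, Real.sin t / t)

/-- The cosine integral `ci(x) = -∫_x^∞ cos t / t dt`, defined via the improper
(limit of interval integrals) form. -/
noncomputable def ci (x : ℝ) : ℝ :=
  - limUnder Filter.atTop (fun R : ℝ => ∫ t in x..R, Real.cos t / t)

/-- The kernel `S_a(x) = sign(x) (si(a|x|) cos(a|x|) - ci(a|x|) sin(a|x|))`, with `S_a(0)=0`. -/
noncomputable def Sker (a x : ℝ) : ℝ :=
  Real.sign x * (si (a * |x|) * Real.cos (a * |x|) - ci (a * |x|) * Real.sin (a * |x|))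

/-- The kernel `T_a(x) = si(a|x|) sin(a|x|) + ci(a|x|) cos(a|x|)`. -/
noncomputable def Tker (a x : ℝ) : ℝ :=
  si (a * |x|) * Real.sin (a * |x|) + ci (a * |x|) * Real.cos (a * |x|)

open Set Real

theorem abs_mul_sin_add_mul_cos_le (b c θ : ℝ) : |b * sin θ + c * cos θ| ≤ |b| + |c| :=
  calc _ ≤ |b * sin θ| + |c * cos θ| := abs_add_le _ _
    _ ≤ |b| * 1 + |c| * 1 := by
        rw [abs_mul, abs_mul]
        gcongr
        exacts [abs_sin_le_one θ, abs_cos_le_one θ]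
    _ = |b| + |c| := by ring

theorem integral_exp_neg_mul_mul_sin {b ξ : ℝ} (h : b ^ 2 + ξ ^ 2 ≠ 0) (R : ℝ) :
    ∫ x in (0:ℝ)..R, exp (-b * x) * sin (ξ * x)
      = (ξ - exp (-b * R) * (b * sin (ξ * R) + ξ * cos (ξ * R))) / (b ^ 2 + ξ ^ 2) := by
  have hderiv (x : ℝ) : HasDerivAt
      (fun x => -(exp (-b * x) * (b * sin (ξ * x) + ξ * cos (ξ * x))) / (b ^ 2 + ξ ^ 2))
      (exp (-b * x) * sin (ξ * x)) x := by
    have hlin (c : ℝ) : HasDerivAt (fun x => c * x) c x := by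
      simpa using (hasDerivAt_id x).const_mul c
    refine ((((hlin (-b)).exp).mul ((((hlin ξ).sin).const_mul b).add
      (((hlin ξ).cos).const_mul ξ))).neg.div_const _).congr_deriv ?_
    simp only [Pi.add_apply]
    field_simp
    ring
  rw [intervalIntegral.integral_eq_sub_of_hasDerivAt (fun x _ => hderiv x)
    (by apply Continuous.intervalIntegrable; fun_prop)]
  simp only [mul_zero, exp_zero, sin_zero, cos_zero]
  ring

theorem abs_integral_exp_neg_mul_mul_sin_le {b ξ R : ℝ} (hb : 0 ≤ b) (hξ : 0 < ξ) (hR : 0 ≤ R) :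
    |∫ x in (0:ℝ)..R, exp (-b * x) * sin (ξ * x)| ≤ 3 / ξ := by
  have hden : 0 < b ^ 2 + ξ ^ 2 := by positivity
  rw [integral_exp_neg_mul_mul_sin hden.ne', abs_div, abs_of_pos hden, div_le_div_iff₀ hden hξ]
  have hexp : exp (-b * R) ≤ 1 := exp_le_one_iff.mpr (by nlinarith)
  have hnum : |ξ - exp (-b * R) * (b * sin (ξ * R) + ξ * cos (ξ * R))| ≤ 2 * ξ + b :=
    calc _ ≤ |ξ| + |exp (-b * R) * (b * sin (ξ * R) + ξ * cos (ξ * R))| := abs_sub _ _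
      _ = ξ + exp (-b * R) * |b * sin (ξ * R) + ξ * cos (ξ * R)| := by
          rw [abs_mul, abs_of_pos hξ, abs_of_pos (exp_pos _)]
      _ ≤ ξ + 1 * (|b| + |ξ|) := by gcongr; exact abs_mul_sin_add_mul_cos_le _ _ _
      _ = 2 * ξ + b := by rw [abs_of_nonneg hb, abs_of_pos hξ]; ring
  nlinarith [mul_le_mul_of_nonneg_right hnum hξ.le, sq_nonneg (b - ξ), sq_nonneg b]

theorem tendsto_integral_exp_neg_mul_mul_sin {b : ℝ} (hb : 0 < b) (ξ : ℝ) :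
    Tendsto (fun R => ∫ x in (0:ℝ)..R, exp (-b * x) * sin (ξ * x)) atTop
      (𝓝 (ξ / (b ^ 2 + ξ ^ 2))) := by
  simp_rw [integral_exp_neg_mul_mul_sin (by positivity : b ^ 2 + ξ ^ 2 ≠ 0)]
  have hexp : Tendsto (fun R => exp (-b * R)) atTop (𝓝 0) :=
    tendsto_exp_atBot.comp (tendsto_id.const_mul_atTop_of_neg (neg_lt_zero.mpr hb))
  have hosc : IsBoundedUnder (· ≤ ·) atTop
      (norm ∘ fun R => b * sin (ξ * R) + ξ * cos (ξ * R)) :=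
    isBoundedUnder_of ⟨|b| + |ξ|, fun R => abs_mul_sin_add_mul_cos_le _ _ _⟩
  simpa using ((tendsto_const_nhds (x := ξ)).sub
    (hexp.zero_mul_isBoundedUnder_le hosc)).div_const (b ^ 2 + ξ ^ 2)

theorem intervalIntegral_integral_Ioi_swap {F : ℝ → ℝ → ℝ} {k : ℝ → ℝ} {a b c : ℝ}
    (hab : a ≤ b) (hF : Continuous (Function.uncurry F)) (hk : IntegrableOn k (Ioi c))
    (hFk : ∀ x ∈ Ioc a b, ∀ u ∈ Ioi c, |F x u| ≤ k u) :
    ∫ x in a..b, ∫ u in Ioi c, F x u = ∫ u in Ioi c, ∫ x in a..b, F x u := by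
  simp_rw [intervalIntegral.integral_of_le hab]
  refine integral_integral_swap ?_
  refine ((integrable_const (1 : ℝ)).mul_prod hk).mono' hF.aestronglyMeasurable ?_
  rw [Measure.prod_restrict]
  filter_upwards [ae_restrict_mem (measurableSet_Ioc.prod measurableSet_Ioi)] with z hz
  rw [norm_eq_abs, one_mul]
  exact hFk z.1 hz.1 z.2 hz.2

/-- The auxiliary function `f` of the sine and cosine integrals (Abramowitz–Stegun 5.2.12). -/
noncomputable def laplaceInvOneAddSq (y : ℝ) : ℝ :=
  ∫ u in Ioi (0:ℝ), exp (-y * u) / (1 + u ^ 2)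

theorem exp_neg_mul_div_one_add_sq_le {y u : ℝ} (hy : 0 ≤ y) (hu : 0 ≤ u) :
    exp (-y * u) / (1 + u ^ 2) ≤ (1 + u ^ 2)⁻¹ := by
  rw [div_eq_mul_inv]
  exact mul_le_of_le_one_left (by positivity) (exp_le_one_iff.mpr (by nlinarith))

theorem integrableOn_exp_neg_mul_div_one_add_sq {y : ℝ} (hy : 0 ≤ y) :
    IntegrableOn (fun u => exp (-y * u) / (1 + u ^ 2)) (Ioi 0) := by
  refine integrable_inv_one_add_sq.integrableOn.mono'
    (Continuous.aestronglyMeasurable (by fun_prop (disch := intro; positivity))) ?_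
  filter_upwards [ae_restrict_mem measurableSet_Ioi] with u hu
  rw [norm_of_nonneg (by positivity)]
  exact exp_neg_mul_div_one_add_sq_le hy (le_of_lt hu)

theorem laplaceInvOneAddSq_nonneg (y : ℝ) : 0 ≤ laplaceInvOneAddSq y :=
  integral_nonneg fun u => by positivity

theorem laplaceInvOneAddSq_le {y : ℝ} (hy : 0 ≤ y) : laplaceInvOneAddSq y ≤ π / 2 := by
  calc laplaceInvOneAddSq y ≤ ∫ u in Ioi (0:ℝ), (1 + u ^ 2)⁻¹ :=
        setIntegral_mono_on (integrableOn_exp_neg_mul_div_one_add_sq hy)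
          integrable_inv_one_add_sq.integrableOn measurableSet_Ioi
          fun u hu => exp_neg_mul_div_one_add_sq_le hy (le_of_lt hu)
    _ = π / 2 := by simp

theorem measurable_laplaceInvOneAddSq : Measurable laplaceInvOneAddSq :=
  (StronglyMeasurable.integral_prod_right
    (f := fun y u => exp (-y * u) / (1 + u ^ 2))
    (Continuous.stronglyMeasurable (by fun_prop (disch := intro; positivity)))).measurable

theorem integral_sin_div_add_eq {y S : ℝ} (hy : 0 < y) (hS : 0 ≤ S) :
    ∫ s in (0:ℝ)..S, sin s / (s + y)
      = ∫ u in Ioi (0:ℝ), exp (-y * u) * ∫ s in (0:ℝ)..S, exp (-u * s) * sin (1 * s) := by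
  have hkernel (s : ℝ) (hs : 0 ≤ s) :
      sin s / (s + y) = ∫ u in Ioi (0:ℝ), exp (-y * u) * (exp (-u * s) * sin (1 * s)) := by
    have hexp (u : ℝ) : exp (-y * u) * (exp (-u * s) * sin (1 * s))
        = sin s * exp (-(s + y) * u) := by
      rw [one_mul, show -(s + y) * u = -y * u + -u * s by ring, exp_add]; ring
    simp_rw [hexp, integral_const_mul, integral_exp_mul_Ioi (by linarith : -(s + y) < 0)]
    have : s + y ≠ 0 := by linarith
    rw [mul_zero, exp_zero]
    field_simp
  rw [intervalIntegral.integral_congr fun s hs => hkernel s (by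
      rw [uIcc_of_le hS] at hs; exact hs.1),
    intervalIntegral_integral_Ioi_swap hS (by fun_prop)
      (exp_neg_integrableOn_Ioi 0 hy) fun s hs u hu => ?_]
  · simp_rw [intervalIntegral.integral_const_mul]
  · rw [abs_mul, abs_mul, abs_of_pos (exp_pos _), abs_of_pos (exp_pos _)]
    have : exp (-u * s) ≤ 1 := exp_le_one_iff.mpr (by nlinarith [hs.1, mem_Ioi.mp hu])
    calc exp (-y * u) * (exp (-u * s) * |sin (1 * s)|) ≤ exp (-y * u) * (1 * 1) := by
          gcongr; exact abs_sin_le_one _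
      _ = exp (-y * u) := by ring

theorem tendsto_integral_sin_div_add {y : ℝ} (hy : 0 < y) :
    Tendsto (fun S => ∫ s in (0:ℝ)..S, sin s / (s + y)) atTop
      (𝓝 (laplaceInvOneAddSq y)) := by
  have hlim : Tendsto (fun S => ∫ u in Ioi (0:ℝ),
      exp (-y * u) * ∫ s in (0:ℝ)..S, exp (-u * s) * sin (1 * s)) atTop
      (𝓝 (laplaceInvOneAddSq y)) := by
    refine tendsto_integral_filter_of_dominated_convergence (fun u => exp (-y * u) * 3)
      (Eventually.of_forall fun S => (by fun_prop : Continuous _).aestronglyMeasurable) ?_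
      ((exp_neg_integrableOn_Ioi 0 hy).mul_const 3) ?_
    · filter_upwards [eventually_ge_atTop 0] with S hS
      filter_upwards [ae_restrict_mem measurableSet_Ioi] with u hu
      rw [norm_mul, norm_of_nonneg (exp_pos _).le, norm_eq_abs]
      gcongr
      simpa using abs_integral_exp_neg_mul_mul_sin_le (le_of_lt hu) one_pos hS
    · filter_upwards [ae_restrict_mem measurableSet_Ioi] with u hu
      simpa [div_eq_mul_inv, add_comm] using
        (tendsto_integral_exp_neg_mul_mul_sin hu 1).const_mul (exp (-y * u))
  refine hlim.congr' ?_
  filter_upwards [eventually_ge_atTop 0] with S hS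
  exact (integral_sin_div_add_eq hy hS).symm

theorem Continuous.intervalIntegrable_div_self {f : ℝ → ℝ} (hf : Continuous f) {a b : ℝ}
    (ha : 0 < a) (hab : a ≤ b) : IntervalIntegrable (fun t => f t / t) volume a b := by
  refine (hf.continuousOn.div continuousOn_id fun t ht => ?_).intervalIntegrable
  rw [uIcc_of_le hab] at ht
  exact (ha.trans_le ht.1).ne'

theorem integral_div_self_eq_of_hasDerivAt {φ Φ : ℝ → ℝ} {y R : ℝ} (hy : 0 < y) (hR : y ≤ R)
    (hΦ : ∀ t, HasDerivAt Φ (φ t) t) (hφ : Continuous φ) :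
    ∫ t in y..R, φ t / t = Φ R / R - Φ y / y + ∫ t in y..R, Φ t / t ^ 2 := by
  have hpos : ∀ t ∈ uIcc y R, 0 < t := fun t ht => by
    rw [uIcc_of_le hR] at ht; exact hy.trans_le ht.1
  have hint₁ := hφ.intervalIntegrable_div_self hy hR
  have hint₂ : IntervalIntegrable (fun t => Φ t / t ^ 2) volume y R :=
    (ContinuousOn.div (fun t _ => (hΦ t).continuousAt.continuousWithinAt) (continuousOn_pow 2)
      fun t ht => (pow_pos (hpos t ht) 2).ne').intervalIntegrable
  have hftc := intervalIntegral.integral_eq_sub_of_hasDerivAt (f := fun t => Φ t / t)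
    (fun t ht => ((hΦ t).div (hasDerivAt_id t) (hpos t ht).ne').congr_deriv
      (by have := (hpos t ht).ne'; simp only [id_eq]; field_simp))
    (hint₁.sub hint₂)
  rw [intervalIntegral.integral_sub hint₁ hint₂] at hftc
  linarith

theorem tendsto_integral_div_self_of_hasDerivAt {φ Φ : ℝ → ℝ} {C y : ℝ} (hy : 0 < y)
    (hΦ : ∀ t, HasDerivAt Φ (φ t) t) (hφ : Continuous φ) (hC : ∀ t, |Φ t| ≤ C) :
    Tendsto (fun R => ∫ t in y..R, φ t / t) atTop
      (𝓝 (-(Φ y / y) + ∫ t in Ioi y, Φ t / t ^ 2)) := by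
  have hboundary : Tendsto (fun R => Φ R / R) atTop (𝓝 0) := by
    simpa [div_eq_inv_mul] using tendsto_inv_atTop_zero.zero_mul_isBoundedUnder_le
      (isBoundedUnder_of ⟨C, fun t => hC t⟩ : IsBoundedUnder (· ≤ ·) atTop (norm ∘ Φ))
  have hintegrable : IntegrableOn (fun t => Φ t / t ^ 2) (Ioi y) := by
    refine ((integrableOn_Ioi_rpow_of_lt (by norm_num : (-2:ℝ) < -1) hy).const_mul C).mono'
      ((ContinuousOn.div (fun t _ => (hΦ t).continuousAt.continuousWithinAt)
        (continuousOn_pow 2) fun t ht =>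
          (pow_pos (hy.trans ht) 2).ne').aestronglyMeasurable measurableSet_Ioi) ?_
    filter_upwards [ae_restrict_mem measurableSet_Ioi] with t ht
    rw [norm_div, norm_eq_abs, norm_of_nonneg (by positivity), rpow_neg (hy.trans ht).le,
      rpow_two, div_eq_mul_inv]
    gcongr
    exact hC t
  have hlim := (hboundary.sub_const (Φ y / y)).add
    (intervalIntegral_tendsto_integral_Ioi y hintegrable tendsto_id)
  rw [zero_sub] at hlim
  refine hlim.congr' ?_
  filter_upwards [eventually_ge_atTop y] with R hR
  exact (integral_div_self_eq_of_hasDerivAt hy hR hΦ hφ).symm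

theorem tendsto_integral_sin_div_self {y : ℝ} (hy : 0 < y) :
    Tendsto (fun R => ∫ t in y..R, sin t / t) atTop (𝓝 (-si y)) := by
  have h := tendsto_integral_div_self_of_hasDerivAt hy
    (fun t => by simpa using (hasDerivAt_cos t).neg) continuous_sin (C := 1)
    fun t => by simpa using abs_cos_le_one t
  rwa [si, neg_neg, h.limUnder_eq]

theorem tendsto_integral_cos_div_self {y : ℝ} (hy : 0 < y) :
    Tendsto (fun R => ∫ t in y..R, cos t / t) atTop (𝓝 (-ci y)) := by
  have h := tendsto_integral_div_self_of_hasDerivAt hy hasDerivAt_sin continuous_cos (C := 1)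
    abs_sin_le_one
  rwa [ci, neg_neg, h.limUnder_eq]

theorem si_mul_cos_sub_ci_mul_sin {y : ℝ} (hy : 0 < y) :
    si y * cos y - ci y * sin y = -laplaceInvOneAddSq y := by
  have hcomb := ((tendsto_integral_sin_div_self hy).mul_const (cos y)).sub
    ((tendsto_integral_cos_div_self hy).mul_const (sin y))
  have hshift : Tendsto (fun R => ∫ s in (0:ℝ)..R - y, sin s / (s + y)) atTop
      (𝓝 (laplaceInvOneAddSq y)) :=
    (tendsto_integral_sin_div_add hy).comp (tendsto_atTop_add_const_right _ (-y) tendsto_id)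
  have heq : ∀ᶠ R in atTop, (∫ t in y..R, sin t / t) * cos y - (∫ t in y..R, cos t / t) * sin y
      = ∫ s in (0:ℝ)..R - y, sin s / (s + y) := by
    filter_upwards [eventually_ge_atTop y] with R hR
    rw [← intervalIntegral.integral_mul_const, ← intervalIntegral.integral_mul_const,
      ← intervalIntegral.integral_sub
        ((continuous_sin.intervalIntegrable_div_self hy hR).mul_const _)
        ((continuous_cos.intervalIntegrable_div_self hy hR).mul_const _)]
    have hsubst := intervalIntegral.integral_comp_add_right (fun t => sin (t - y) / t)
      (a := 0) (b := R - y) y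
    simp only [add_sub_cancel_right, zero_add, sub_add_cancel] at hsubst
    rw [hsubst]
    congr 1 with t
    rw [sin_sub]
    ring
  have := tendsto_nhds_unique (hcomb.congr' heq) hshift
  linarith

theorem integral_Ioi_inv_one_add_sq_mul_self :
    ∫ u in Ioi (0:ℝ), (1 + u ^ 2)⁻¹ * (1 + u ^ 2)⁻¹ = π / 4 := by
  have hderiv (u : ℝ) : HasDerivAt (fun u => (arctan u + u / (1 + u ^ 2)) / 2)
      ((1 + u ^ 2)⁻¹ * (1 + u ^ 2)⁻¹) u := by
    have hsq : HasDerivAt (fun u : ℝ => 1 + u ^ 2) (2 * u) u := by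
      simpa using (hasDerivAt_pow 2 u).const_add 1
    refine (((hasDerivAt_arctan u).add ((hasDerivAt_id u).div hsq (by positivity))).div_const
      2).congr_deriv ?_
    simp only [id_eq]
    field_simp
    ring
  have hdecay : Tendsto (fun u : ℝ => u / (1 + u ^ 2)) atTop (𝓝 0) := by
    refine squeeze_zero' ?_ ?_ tendsto_inv_atTop_zero
    · filter_upwards [eventually_ge_atTop 0] with u hu using by positivity
    · filter_upwards [eventually_gt_atTop 0] with u hu
      rw [div_le_iff₀ (by positivity), inv_mul_eq_div, le_div_iff₀ hu]
      nlinarith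
  have hlim := ((tendsto_nhds_of_tendsto_nhdsWithin tendsto_arctan_atTop).add hdecay).div_const 2
  rw [integral_Ioi_of_hasDerivAt_of_nonneg' (fun u _ => hderiv u) (fun u _ => by positivity)
    hlim]
  simp only [arctan_zero]
  ring

theorem integral_Ioi_inv_one_add_sq_mul_inv_one_add_mul_sq {c : ℝ} (hc : 0 < c) :
    ∫ u in Ioi (0:ℝ), (1 + u ^ 2)⁻¹ * (1 + (c * u) ^ 2)⁻¹ = π / (2 * (1 + c)) := by
  rcases eq_or_ne c 1 with rfl | hc1
  · simp only [one_mul, integral_Ioi_inv_one_add_sq_mul_self]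
    ring
  have hc2 : 1 - c ^ 2 ≠ 0 := by
    intro h; apply hc1; nlinarith
  have hderiv (u : ℝ) : HasDerivAt (fun u => (arctan u - c * arctan (c * u)) / (1 - c ^ 2))
      ((1 + u ^ 2)⁻¹ * (1 + (c * u) ^ 2)⁻¹) u := by
    have hlin : HasDerivAt (fun u => c * u) c u := by simpa using (hasDerivAt_id u).const_mul c
    refine (((hasDerivAt_arctan u).sub ((hlin.arctan).const_mul c)).div_const _).congr_deriv ?_
    field_simp
    ring
  have harctan := tendsto_nhds_of_tendsto_nhdsWithin tendsto_arctan_atTop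
  have hlim : Tendsto (fun u => (arctan u - c * arctan (c * u)) / (1 - c ^ 2)) atTop
      (𝓝 ((π / 2 - c * (π / 2)) / (1 - c ^ 2))) :=
    (harctan.sub ((harctan.comp (tendsto_id.const_mul_atTop hc)).const_mul c)).div_const _
  rw [integral_Ioi_of_hasDerivAt_of_nonneg' (fun u _ => hderiv u) (fun u _ => by positivity)
    hlim]
  simp only [arctan_zero, mul_zero, sub_zero, zero_div]
  field_simp
  ring

theorem integral_laplaceInvOneAddSq_mul_sin_eq {a ξ R : ℝ} (ha : 0 < a) (hR : 0 ≤ R) :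
    ∫ x in (0:ℝ)..R, laplaceInvOneAddSq (a * x) * sin (ξ * x)
      = ∫ u in Ioi (0:ℝ), (1 + u ^ 2)⁻¹ * ∫ x in (0:ℝ)..R, exp (-(a * u) * x) * sin (ξ * x) := by
  have hkernel (x : ℝ) : laplaceInvOneAddSq (a * x) * sin (ξ * x)
      = ∫ u in Ioi (0:ℝ), (1 + u ^ 2)⁻¹ * (exp (-(a * u) * x) * sin (ξ * x)) := by
    rw [laplaceInvOneAddSq, ← integral_mul_const]
    congr 1 with u
    rw [show -(a * u) * x = -(a * x) * u by ring]
    ring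
  simp_rw [hkernel]
  rw [intervalIntegral_integral_Ioi_swap hR (by fun_prop (disch := intro; positivity))
    integrable_inv_one_add_sq.integrableOn fun x hx u hu => ?_]
  · simp_rw [intervalIntegral.integral_const_mul]
  · have : exp (-(a * u) * x) ≤ 1 :=
      exp_le_one_iff.mpr (by nlinarith [hx.1, mem_Ioi.mp hu, mul_pos ha (mem_Ioi.mp hu)])
    rw [abs_mul, abs_mul, abs_of_pos (by positivity), abs_of_pos (exp_pos _)]
    calc (1 + u ^ 2)⁻¹ * (exp (-(a * u) * x) * |sin (ξ * x)|) ≤ (1 + u ^ 2)⁻¹ * (1 * 1) := by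
          gcongr; exact abs_sin_le_one _
      _ = (1 + u ^ 2)⁻¹ := by ring

theorem tendsto_integral_laplaceInvOneAddSq_mul_sin {a ξ : ℝ} (ha : 0 < a) (hξ : 0 < ξ) :
    Tendsto (fun R => ∫ x in (0:ℝ)..R, laplaceInvOneAddSq (a * x) * sin (ξ * x)) atTop
      (𝓝 (π / (2 * (ξ + a)))) := by
  have hlim : Tendsto (fun R => ∫ u in Ioi (0:ℝ),
      (1 + u ^ 2)⁻¹ * ∫ x in (0:ℝ)..R, exp (-(a * u) * x) * sin (ξ * x)) atTop
      (𝓝 (∫ u in Ioi (0:ℝ), (1 + u ^ 2)⁻¹ * (ξ / ((a * u) ^ 2 + ξ ^ 2)))) := by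
    refine tendsto_integral_filter_of_dominated_convergence (fun u => (1 + u ^ 2)⁻¹ * (3 / ξ))
      (Eventually.of_forall fun R =>
        (by fun_prop (disch := intro; positivity) : Continuous _).aestronglyMeasurable) ?_
      (integrable_inv_one_add_sq.integrableOn.mul_const _) ?_
    · filter_upwards [eventually_ge_atTop 0] with R hR
      filter_upwards [ae_restrict_mem measurableSet_Ioi] with u hu
      rw [norm_mul, norm_of_nonneg (by positivity), norm_eq_abs]
      gcongr
      exact abs_integral_exp_neg_mul_mul_sin_le (mul_pos ha hu).le hξ hR
    · filter_upwards [ae_restrict_mem measurableSet_Ioi] with u hu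
      exact (tendsto_integral_exp_neg_mul_mul_sin (mul_pos ha hu) ξ).const_mul _
  have hvalue : ∫ u in Ioi (0:ℝ), (1 + u ^ 2)⁻¹ * (ξ / ((a * u) ^ 2 + ξ ^ 2))
      = π / (2 * (ξ + a)) := by
    have hrescale (u : ℝ) : (1 + u ^ 2)⁻¹ * (ξ / ((a * u) ^ 2 + ξ ^ 2))
        = ξ⁻¹ * ((1 + u ^ 2)⁻¹ * (1 + (a / ξ * u) ^ 2)⁻¹) := by
      field_simp
      ring
    simp_rw [hrescale, integral_const_mul,
      integral_Ioi_inv_one_add_sq_mul_inv_one_add_mul_sq (div_pos ha hξ)]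
    field_simp
  rw [← hvalue]
  refine hlim.congr' ?_
  filter_upwards [eventually_ge_atTop 0] with R hR
  exact (integral_laplaceInvOneAddSq_mul_sin_eq ha hR).symm

theorem integral_ofReal_mul_cexp_of_odd {f : ℝ → ℝ} (hodd : ∀ x, f (-x) = -f x)
    (hf : ∀ a b, IntervalIntegrable f volume a b) (ξ R : ℝ) :
    ∫ x in (-R)..R, (f x : ℂ) * Complex.exp (Complex.I * ξ * x)
      = 2 * Complex.I * ↑(∫ x in (0:ℝ)..R, f x * sin (ξ * x)) := by
  set h : ℝ → ℂ := fun x => (f x : ℂ) * Complex.exp (Complex.I * ξ * x) with h_def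
  have hfC (a b : ℝ) : IntervalIntegrable (fun x => (f x : ℂ)) volume a b :=
    ⟨(hf a b).1.ofReal, (hf a b).2.ofReal⟩
  have hint (a b : ℝ) : IntervalIntegrable h volume a b :=
    (hfC a b).mul_continuousOn (by fun_prop)
  have hint_neg : IntervalIntegrable (fun x => h (-x)) volume 0 R := by
    simp only [h_def, hodd, Complex.ofReal_neg]
    exact (hfC 0 R).neg.mul_continuousOn (by fun_prop)
  have hsum (x : ℝ) : h (-x) + h x = 2 * Complex.I * ↑(f x * sin (ξ * x)) := by
    simp only [h_def, hodd]
    rw [show Complex.I * ξ * ↑(-x) = ↑(-(ξ * x)) * Complex.I by push_cast; ring,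
      show Complex.I * ξ * x = ↑(ξ * x) * Complex.I by push_cast; ring,
      Complex.exp_mul_I, Complex.exp_mul_I]
    push_cast
    rw [Complex.cos_neg, Complex.sin_neg]
    ring
  calc ∫ x in (-R)..R, h x = (∫ x in (-R)..0, h x) + ∫ x in (0:ℝ)..R, h x :=
        (intervalIntegral.integral_add_adjacent_intervals (hint _ _) (hint _ _)).symm
    _ = ∫ x in (0:ℝ)..R, (h (-x) + h x) := by
        rw [intervalIntegral.integral_add hint_neg (hint _ _), intervalIntegral.integral_comp_neg,
          neg_zero]
    _ = 2 * Complex.I * ↑(∫ x in (0:ℝ)..R, f x * sin (ξ * x)) := by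
        simp_rw [hsum, intervalIntegral.integral_const_mul, intervalIntegral.integral_ofReal]

theorem Sker_neg (a x : ℝ) : Sker a (-x) = -Sker a x := by
  simp only [Sker, Real.sign_neg, abs_neg]
  ring

theorem Sker_eq_neg_sign_mul {a : ℝ} (ha : 0 < a) (x : ℝ) :
    Sker a x = -(Real.sign x * laplaceInvOneAddSq (a * |x|)) := by
  rcases eq_or_ne x 0 with rfl | hx
  · simp [Sker]
  · rw [Sker, si_mul_cos_sub_ci_mul_sin (by positivity)]
    ring

theorem abs_Sker_le {a : ℝ} (ha : 0 < a) (x : ℝ) : |Sker a x| ≤ π / 2 := by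
  have hsign : |Real.sign x| ≤ 1 := by
    rcases Real.sign_apply_eq x with h | h | h <;> simp [h]
  rw [Sker_eq_neg_sign_mul ha, abs_neg, abs_mul, abs_of_nonneg (laplaceInvOneAddSq_nonneg _),
    ← one_mul (π / 2)]
  exact mul_le_mul hsign (laplaceInvOneAddSq_le (by positivity)) (laplaceInvOneAddSq_nonneg _)
    zero_le_one

theorem measurable_Sker {a : ℝ} (ha : 0 < a) : Measurable (Sker a) := by
  have hsign : Measurable Real.sign :=
    Measurable.ite measurableSet_Iio measurable_const
      (Measurable.ite measurableSet_Ioi measurable_const measurable_const)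
  rw [funext (Sker_eq_neg_sign_mul ha)]
  exact (hsign.mul (measurable_laplaceInvOneAddSq.comp (by fun_prop))).neg

theorem intervalIntegrable_Sker {a : ℝ} (ha : 0 < a) (b c : ℝ) :
    IntervalIntegrable (Sker a) volume b c :=
  intervalIntegrable_const.mono_fun' (measurable_Sker ha).aestronglyMeasurable
    (Eventually.of_forall fun x => abs_Sker_le ha x)

theorem tendsto_integral_Sker_mul_sin {a ξ : ℝ} (ha : 0 < a) (hξ : 0 < ξ) :
    Tendsto (fun R => ∫ x in (0:ℝ)..R, Sker a x * sin (ξ * x)) atTop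
      (𝓝 (-(π / (2 * (ξ + a))))) := by
  refine (tendsto_integral_laplaceInvOneAddSq_mul_sin ha hξ).neg.congr' ?_
  filter_upwards [eventually_ge_atTop 0] with R hR
  rw [← intervalIntegral.integral_neg]
  refine intervalIntegral.integral_congr fun x hx => ?_
  rw [uIcc_of_le hR] at hx
  rcases hx.1.eq_or_lt with rfl | hx0
  · simp
  · simp [Sker_eq_neg_sign_mul ha, Real.sign_of_pos hx0, abs_of_pos hx0]

theorem tendsto_integral_Sker_mul_sin_of_ne {a ξ : ℝ} (ha : 0 < a) (hξ : ξ ≠ 0) :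
    Tendsto (fun R => ∫ x in (0:ℝ)..R, Sker a x * sin (ξ * x)) atTop
      (𝓝 (-(Real.sign ξ * (π / (2 * (|ξ| + a)))))) := by
  rcases hξ.lt_or_gt with hneg | hpos
  · have h := (tendsto_integral_Sker_mul_sin ha (neg_pos.mpr hneg)).neg
    simp only [← intervalIntegral.integral_neg, neg_mul, sin_neg, mul_neg, neg_neg] at h
    rwa [Real.sign_of_neg hneg, abs_of_neg hneg, neg_one_mul, neg_neg]
  · simpa [Real.sign_of_pos hpos, abs_of_pos hpos] using tendsto_integral_Sker_mul_sin ha hpos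

/-- For `ξ > 0`, `∫_0^∞ S_a(x) sin(ξx) dx = -π/(2(ξ+a))` in the improper
sense; consequently the (improper, symmetric) Fourier transform of the odd function
`S_a` equals `-iπ sign(ξ)/(|ξ|+a)` for `ξ ≠ 0`. -/
theorem stmt6 (a : ℝ) (ha : 0 < a) :
    (∀ ξ : ℝ, 0 < ξ →
      Tendsto (fun R : ℝ => ∫ x in (0:ℝ)..R, Sker a x * Real.sin (ξ * x))
        atTop (nhds (-(Real.pi / (2 * (ξ + a)))))) ∧
    (∀ ξ : ℝ, ξ ≠ 0 →
      Tendsto (fun R : ℝ => ∫ x in (-R)..R, (Sker a x : ℂ) * Complex.exp (Complex.I * ξ * x))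
        atTop (nhds (-Complex.I * Real.pi * (Real.sign ξ : ℂ) / ((|ξ| : ℝ) + a)))) := by
  refine ⟨fun ξ hξ => tendsto_integral_Sker_mul_sin ha hξ, fun ξ hξ => ?_⟩
  simp_rw [integral_ofReal_mul_cexp_of_odd (Sker_neg a) (intervalIntegrable_Sker ha) ξ]
  have hden : ((|ξ| : ℝ) : ℂ) + a ≠ 0 := by exact_mod_cast (by positivity : |ξ| + a ≠ 0)
  rw [show -Complex.I * π * (Real.sign ξ : ℂ) / ((|ξ| : ℝ) + a)
      = 2 * Complex.I * ↑(-(Real.sign ξ * (π / (2 * (|ξ| + a))))) by push_cast; field_simp]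
  exact ((Complex.continuous_ofReal.tendsto _).comp
    (tendsto_integral_Sker_mul_sin_of_ne ha hξ)).const_mul _
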